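/- arXiv:1701.01263 — 5 statements merged into one kernel-verified Lean document; each statement's English description precedes it below -/
import Mathlib

section
/- For a finite associative ring R with unity, a pair (a,b) in R² is admissible (i.e., extends to a row of an invertible 2×2 matrix over R) if and only if it is unimodular (i.e., there exist x,y in R with ax + by = 1). -/
open Matrix
set_option maxHeartbeats 1600000

/-- The cyclic left submodule `R(a,b)` of `R²`. -/
def ptSub (R : Type*) [Ring R] (a b : R) : Submodule R (Fin 2 → R) :=
  Submodule.span R {![a, b]}

/-- The right action of an invertible matrix `g` on submodules of `R²`, via `v ↦ v ᵥ* g`. -/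
def mulGL (R : Type*) [Ring R] (g : (Matrix (Fin 2) (Fin 2) R)ˣ)
    (p : Submodule R (Fin 2 → R)) : Submodule R (Fin 2 → R) :=
  p.map (Matrix.vecMulLinear g.val)

/-- The projective line over `R`: the orbit of `R(1,0)` under `GL₂(R)`. -/
def projLine (R : Type*) [Ring R] : Set (Submodule R (Fin 2 → R)) :=
  {p | ∃ g, mulGL R g (ptSub R 1 0) = p}

/-- The distant relation: the orbit of the pair `(R(1,0), R(0,1))` under `GL₂(R)`. -/
def IsDistant (R : Type*) [Ring R] (p q : Submodule R (Fin 2 → R)) : Prop :=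
  ∃ g, mulGL R g (ptSub R 1 0) = p ∧ mulGL R g (ptSub R 0 1) = q

section KeyLemma

open Function LinearMap Submodule

universe u v

set_option maxHeartbeats 1600000

/-- Key lemma: in a finite module, a "unimodular pair" of maps `(α, β)` can be corrected
by `σ` so that `α + β ∘ σ` is an automorphism.  (Stable rank one for endomorphism rings of
finite modules.) -/
theorem key_aux : ∀ (n : ℕ) {R : Type v} {M N : Type u} [Ring R] [AddCommGroup M]
    [Module R M] [AddCommGroup N] [Module R N] [Finite M], Nat.card M ≤ n →
    ∀ (α : M →ₗ[R] M) (β : N →ₗ[R] M) (ξ : M →ₗ[R] M) (η : M →ₗ[R] N),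
    α ∘ₗ ξ + β ∘ₗ η = LinearMap.id →
    ∃ σ : M →ₗ[R] N, Function.Bijective (α + β ∘ₗ σ) := by
  intro n
  induction n with
  | zero =>
    intro R M N _ _ _ _ _ _ hcard
    exact absurd (Nat.le_zero.mp hcard) Nat.card_pos.ne'
  | succ n IH =>
    intro R M N _ _ _ _ _ _ hcard α β ξ η hEq
    set θ : M →ₗ[R] M := β ∘ₗ η with hθ
    have hβη : ∀ x : M, β (η x) = θ x := by
      intro x; rw [hθ]; simp only [LinearMap.comp_apply]
    by_cases hinj : Function.Injective θ
    · -- θ is bijective; we can make `α + β∘σ = id`.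
      have hbij : Function.Bijective θ := ⟨hinj, Finite.injective_iff_surjective.1 hinj⟩
      let eθ := LinearEquiv.ofBijective θ hbij
      refine ⟨η ∘ₗ (eθ.symm : M →ₗ[R] M) ∘ₗ ((LinearMap.id : M →ₗ[R] M) - α), ?_⟩
      have h1 : ∀ x : M, (α + β ∘ₗ (η ∘ₗ (eθ.symm : M →ₗ[R] M)
          ∘ₗ ((LinearMap.id : M →ₗ[R] M) - α))) x = x := by
        intro x
        simp only [LinearMap.add_apply, LinearMap.comp_apply, LinearMap.sub_apply,
          LinearMap.id_apply, LinearEquiv.coe_coe]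
        have h2 : β (η (eθ.symm (x - α x))) = x - α x := by
          calc β (η (eθ.symm (x - α x))) = θ (eθ.symm (x - α x)) := hβη _
            _ = eθ (eθ.symm (x - α x)) := (LinearEquiv.ofBijective_apply _ _).symm
            _ = x - α x := eθ.apply_symm_apply _
        rw [h2]; abel
      have h4 : ⇑(α + β ∘ₗ (η ∘ₗ (eθ.symm : M →ₗ[R] M)
          ∘ₗ ((LinearMap.id : M →ₗ[R] M) - α))) = _root_.id := funext h1
      rw [h4]
      exact Function.bijective_id
    · -- Fitting decomposition of θ.
      obtain ⟨N₁, h₁⟩ :=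
        Filter.eventually_atTop.mp (LinearMap.eventually_isCompl_ker_pow_range_pow θ)
      obtain ⟨N₂, h₂⟩ := Filter.eventually_atTop.mp (LinearMap.eventually_iInf_range_pow_eq θ)
      set m : ℕ := max 1 (max N₁ N₂) with hm
      have hm1 : 1 ≤ m := le_max_left _ _
      have hcompl : IsCompl (ker (θ ^ m)) (range (θ ^ m)) :=
        h₁ m (le_trans (le_max_left _ _) (le_max_right _ _))
      have hrange : range (θ ^ (m + 1)) = range (θ ^ m) :=
        ((h₂ (m + 1) (le_trans (le_trans (le_max_right _ _) (le_max_right _ _))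
          (Nat.le_succ m))).symm.trans (h₂ m (le_trans (le_max_right _ _) (le_max_right _ _))))
      set K : Submodule R M := ker (θ ^ m) with hK
      set I : Submodule R M := range (θ ^ m) with hI
      have hkerK : ∀ x : M, θ x = 0 → x ∈ K := by
        intro x hx
        obtain ⟨k, hk⟩ : ∃ k, m = k + 1 := ⟨m - 1, by omega⟩
        show (θ ^ m) x = 0
        rw [hk, pow_succ, Module.End.mul_apply, hx, map_zero]
      by_cases hIbot : I = ⊥
      · -- θ^m = 0 : α is surjective, take σ = 0
        have hθm : θ ^ m = 0 := LinearMap.range_eq_bot.mp hIbot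
        refine ⟨0, ?_⟩
        have hαβ : α + β ∘ₗ (0 : M →ₗ[R] N) = α := by simp
        rw [hαβ]
        have hsurj : Function.Surjective α := by
          have hend : (α * ξ : Module.End R M) = 1 - θ := by
            have h3 : (α * ξ : Module.End R M) + θ = 1 := hEq
            rw [← h3]; abel
          have hgeom : ((α * ξ : Module.End R M) * ∑ i ∈ Finset.range m, θ ^ i) = 1 := by
            rw [hend]
            have h4 : ((1 : Module.End R M) - θ) * ∑ i ∈ Finset.range m, θ ^ i
                = 1 - θ ^ m := by
              have h5 := mul_geom_sum (θ : Module.End R M) m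
              calc ((1 : Module.End R M) - θ) * ∑ i ∈ Finset.range m, θ ^ i
                  = -((θ - 1) * ∑ i ∈ Finset.range m, θ ^ i) := by noncomm_ring
                _ = -(θ ^ m - 1) := by rw [h5]
                _ = 1 - θ ^ m := by abel
            rw [h4, hθm, sub_zero]
          intro y
          refine ⟨ξ ((∑ i ∈ Finset.range m, θ ^ i) y), ?_⟩
          have := congrArg (fun f : Module.End R M => f y) hgeom
          simpa [Module.End.mul_apply] using this
        exact ⟨Finite.injective_iff_surjective.2 hsurj, hsurj⟩
      · -- Main case: both K and I are nonzero.
        set π : M →ₗ[R] K := K.linearProjOfIsCompl I hcompl with hπdef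
        set ρ : M →ₗ[R] I := I.linearProjOfIsCompl K hcompl.symm with hρdef
        have hπρ : ∀ x : M, (↑(π x) + ↑(ρ x) : M) = x := fun x =>
          Submodule.projection_add_projection_eq_self hcompl x
        have hπK : ∀ k : K, π ↑k = k := fun k =>
          Submodule.linearProjOfIsCompl_apply_left hcompl k
        have hπI : ∀ i : I, π ↑i = 0 := fun i =>
          Submodule.linearProjOfIsCompl_apply_right hcompl i
        have hρI : ∀ i : I, ρ ↑i = i := fun i =>
          Submodule.linearProjOfIsCompl_apply_left hcompl.symm i
        have hρK : ∀ k : K, ρ ↑k = 0 := fun k =>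
          Submodule.linearProjOfIsCompl_apply_right hcompl.symm k
        -- θ preserves I, and is bijective there
        have hθI : ∀ x ∈ I, θ x ∈ I := by
          intro x hx
          obtain ⟨y, hy⟩ := hx
          have h6 : θ x ∈ range (θ ^ (m + 1)) :=
            ⟨y, by rw [← hy, pow_succ', Module.End.mul_apply]⟩
          rw [hrange] at h6
          exact h6
        set θ₁ : I →ₗ[R] I := θ.restrict hθI with hθ₁def
        have hθ₁c : ∀ i : I, (θ₁ i : M) = θ ↑i := fun i => rfl
        have hθ₁inj : Function.Injective θ₁ := by
          rw [← LinearMap.ker_eq_bot, LinearMap.ker_eq_bot']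
          intro i hi
          have h6 : θ (↑i : M) = 0 := by
            have h7 := congrArg (Subtype.val) hi
            rw [hθ₁c] at h7
            simpa using h7
          have h7 : (↑i : M) ∈ K := hkerK _ h6
          have h8 : (↑i : M) ∈ K ⊓ I := ⟨h7, i.2⟩
          rw [hcompl.inf_eq_bot] at h8
          exact Subtype.ext h8
        have hθ₁surj : Function.Surjective θ₁ := by
          rintro ⟨x, hx⟩
          have hx' : x ∈ range (θ ^ (m + 1)) := by rw [hrange]; exact hx
          obtain ⟨y, hy⟩ := hx'
          refine ⟨⟨(θ ^ m) y, ⟨y, rfl⟩⟩, ?_⟩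
          apply Subtype.ext
          show θ ((θ ^ m) y) = x
          rw [← Module.End.mul_apply, ← pow_succ', hy]
        set e₁ : I ≃ₗ[R] I := LinearEquiv.ofBijective θ₁ ⟨hθ₁inj, hθ₁surj⟩ with he₁
        have hθe : ∀ y : I, θ₁ (e₁.symm y) = y := by
          intro y
          calc θ₁ (e₁.symm y) = e₁ (e₁.symm y) := (LinearEquiv.ofBijective_apply _ _).symm
            _ = y := e₁.apply_symm_apply y
        -- cardinality bound
        have hKcard : Nat.card K ≤ n := by
          have hMeq : Nat.card M = Nat.card K * Nat.card I := by
            rw [← Nat.card_congr (Submodule.prodEquivOfIsCompl K I hcompl).toEquiv,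
              Nat.card_prod]
          have hNontrivI : Nontrivial I := Submodule.nontrivial_iff_ne_bot.mpr hIbot
          have h2I : 2 ≤ Nat.card I := Finite.one_lt_card
          have hKpos : 0 < Nat.card K := Nat.card_pos
          have h12 : Nat.card K * 2 ≤ Nat.card M := by
            rw [hMeq]
            exact Nat.mul_le_mul_left _ h2I
          omega
        -- the IH data on K
        set α' : K →ₗ[R] K := π ∘ₗ α ∘ₗ K.subtype with hα'
        set β' : (I × N) →ₗ[R] K := (π ∘ₗ α ∘ₗ I.subtype).coprod (π ∘ₗ β) with hβ'
        set ξ' : K →ₗ[R] K := π ∘ₗ ξ ∘ₗ K.subtype with hξ'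
        set η' : K →ₗ[R] (I × N) := (ρ ∘ₗ ξ ∘ₗ K.subtype).prod (η ∘ₗ K.subtype) with hη'
        have hEq' : α' ∘ₗ ξ' + β' ∘ₗ η' = LinearMap.id := by
          apply LinearMap.ext; intro k
          simp only [LinearMap.add_apply, LinearMap.comp_apply, LinearMap.id_apply]
          rw [hα', hβ', hξ', hη']
          simp only [LinearMap.comp_apply, LinearMap.coprod_apply, LinearMap.prod_apply,
            Submodule.subtype_apply, Pi.prod]
          have step1 : π (α ↑(π (ξ ↑k))) + π (α ↑(ρ (ξ ↑k))) = π (α (ξ ↑k)) := by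
            rw [← map_add, ← map_add, hπρ]
          calc π (α ↑(π (ξ ↑k))) + (π (α ↑(ρ (ξ ↑k))) + π (β (η ↑k)))
              = (π (α ↑(π (ξ ↑k))) + π (α ↑(ρ (ξ ↑k)))) + π (β (η ↑k)) := by abel
            _ = π (α (ξ ↑k)) + π (θ ↑k) := by rw [step1, hβη]
            _ = π (α (ξ ↑k) + θ ↑k) := by rw [map_add]
            _ = π ((α ∘ₗ ξ + θ) ↑k) := by simp only [LinearMap.add_apply, LinearMap.comp_apply]
            _ = π ↑k := by rw [hEq]; simp only [LinearMap.id_apply]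
            _ = k := hπK k
        obtain ⟨σ', hσ'⟩ := IH hKcard α' β' ξ' η' hEq'
        set Φ : K →ₗ[R] K := α' + β' ∘ₗ σ' with hΦdef
        have hΦ : Function.Bijective Φ := hσ'
        set σ'₁ : K →ₗ[R] I := (LinearMap.fst R I N) ∘ₗ σ' with hσ'₁
        set σ'₂ : K →ₗ[R] N := (LinearMap.snd R I N) ∘ₗ σ' with hσ'₂
        have hΦapp : ∀ k : K, Φ k = π (α ↑k) + (π (α ↑(σ'₁ k)) + π (β (σ'₂ k))) := by
          intro k
          rw [hΦdef, hσ'₁, hσ'₂, hα', hβ']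
          simp only [LinearMap.add_apply, LinearMap.comp_apply, LinearMap.coprod_apply,
            Submodule.subtype_apply, LinearMap.fst_apply, LinearMap.snd_apply]
        -- the twisting automorphism g
        set G : M →ₗ[R] M := I.subtype ∘ₗ σ'₁ ∘ₗ π with hG
        have hGapp : ∀ x : M, G x = ↑(σ'₁ (π x)) := by
          intro x; rw [hG]; simp only [LinearMap.comp_apply, Submodule.subtype_apply]
        set g : M →ₗ[R] M := LinearMap.id + G with hg
        set ginv : M →ₗ[R] M := LinearMap.id - G with hginv
        have hgapp : ∀ x : M, g x = x + ↑(σ'₁ (π x)) := by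
          intro x
          rw [hg]
          simp only [LinearMap.add_apply, LinearMap.id_apply, hGapp]
        have hginvapp : ∀ x : M, ginv x = x - ↑(σ'₁ (π x)) := by
          intro x
          rw [hginv]
          simp only [LinearMap.sub_apply, LinearMap.id_apply, hGapp]
        have hging : ∀ x : M, ginv (g x) = x := by
          intro x
          rw [hgapp, hginvapp]
          have h13 : π (x + ↑(σ'₁ (π x))) = π x := by
            rw [map_add, hπI, add_zero]
          rw [h13]
          abel
        have hgginv : ∀ x : M, g (ginv x) = x := by
          intro x
          rw [hginvapp, hgapp]
          have h13 : π (x - ↑(σ'₁ (π x))) = π x := by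
            rw [map_sub, hπI, sub_zero]
          rw [h13]
          abel
        set gE : M ≃ₗ[R] M := LinearEquiv.ofLinear g ginv
          (LinearMap.ext fun x => by
            simp only [LinearMap.comp_apply, LinearMap.id_apply]; exact hgginv x)
          (LinearMap.ext fun x => by
            simp only [LinearMap.comp_apply, LinearMap.id_apply]; exact hging x) with hgE
        -- correction maps
        set D : K →ₗ[R] M := α ∘ₗ g ∘ₗ K.subtype + β ∘ₗ σ'₂ with hD
        have hDapp : ∀ k : K, D k = α (g ↑k) + β (σ'₂ k) := by
          intro k; rw [hD]
          simp only [LinearMap.add_apply, LinearMap.comp_apply, Submodule.subtype_apply]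
        set w : K →ₗ[R] I := -((e₁.symm : I →ₗ[R] I) ∘ₗ ρ ∘ₗ D) with hw
        have hwapp : ∀ k : K, w k = -(e₁.symm (ρ (D k))) := by
          intro k; rw [hw]
          simp only [LinearMap.neg_apply, LinearMap.comp_apply, LinearEquiv.coe_coe]
        set z : I →ₗ[R] I := (e₁.symm : I →ₗ[R] I) ∘ₗ
          ((LinearMap.id : I →ₗ[R] I) - ρ ∘ₗ α ∘ₗ I.subtype) with hz
        have hzapp : ∀ i : I, z i = e₁.symm (i - ρ (α ↑i)) := by
          intro i; rw [hz]
          simp only [LinearMap.comp_apply, LinearMap.sub_apply, LinearMap.id_apply,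
            Submodule.subtype_apply, LinearEquiv.coe_coe]
        set sh : M →ₗ[R] N := σ'₂ ∘ₗ π + η ∘ₗ I.subtype ∘ₗ w ∘ₗ π
          + η ∘ₗ I.subtype ∘ₗ z ∘ₗ ρ with hsh
        have hshapp : ∀ x : M, sh x = σ'₂ (π x) + η ↑(w (π x)) + η ↑(z (ρ x)) := by
          intro x; rw [hsh]
          simp only [LinearMap.add_apply, LinearMap.comp_apply, Submodule.subtype_apply]
        set v : M →ₗ[R] M := α ∘ₗ g + β ∘ₗ sh with hv
        have hvapp : ∀ x : M, v x = α (g x) + β (sh x) := by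
          intro x; rw [hv]
          simp only [LinearMap.add_apply, LinearMap.comp_apply]
        -- pointwise values of v
        have hgK : ∀ k : K, g ↑k = ↑k + ↑(σ'₁ k) := by
          intro k; rw [hgapp, hπK]
        have hgI : ∀ i : I, g ↑i = ↑i := by
          intro i; rw [hgapp, hπI]
          simp
        have hshK : ∀ k : K, sh ↑k = σ'₂ k + η ↑(w k) := by
          intro k
          rw [hshapp, hπK, hρK]
          simp
        have hshI : ∀ i : I, sh ↑i = η ↑(z i) := by
          intro i
          rw [hshapp, hπI, hρI]
          simp
        have hθsub : ∀ i : I, θ (↑i : M) = ↑(θ₁ i) := fun i => rfl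
        have hρθ : ∀ i : I, ρ (θ ↑i) = θ₁ i := by
          intro i; rw [hθsub, hρI]
        have hπθ : ∀ i : I, π (θ ↑i) = 0 := by
          intro i; rw [hθsub, hπI]
        have hvK : ∀ k : K, v ↑k = D k + θ ↑(w k) := by
          intro k
          rw [hvapp, hshK, map_add, hβη, hDapp]
          abel
        have hρvK : ∀ k : K, ρ (v ↑k) = 0 := by
          intro k
          rw [hvK, map_add, hρθ, hwapp, map_neg, hθe]
          abel
        have hπvK : ∀ k : K, π (v ↑k) = Φ k := by
          intro k
          rw [hvK, map_add, hπθ, add_zero, hDapp, hgK, map_add, map_add, map_add, hΦapp]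
          abel
        have hvI : ∀ i : I, v ↑i = α ↑i + θ ↑(z i) := by
          intro i
          rw [hvapp, hgI, hshI, hβη]
        have hρvI : ∀ i : I, ρ (v ↑i) = i := by
          intro i
          rw [hvI, map_add, hρθ, hzapp, hθe]
          abel
        have hπvI : ∀ i : I, π (v ↑i) = π (α ↑i) := by
          intro i
          rw [hvI, map_add, hπθ, add_zero]
        -- v is bijective
        have hvinj : Function.Injective v := by
          rw [← LinearMap.ker_eq_bot, LinearMap.ker_eq_bot']
          intro x hx
          have hx' : v ↑(π x) + v ↑(ρ x) = 0 := by
            rw [← map_add, hπρ, hx]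
          have hρx : ρ x = 0 := by
            have h14 := congrArg ρ hx'
            rw [map_add, hρvK, hρvI, zero_add, map_zero] at h14
            exact h14
          have hπx : π x = 0 := by
            have h9 : v ↑(π x) = 0 := by
              rw [hρx] at hx'
              rw [ZeroMemClass.coe_zero, map_zero, add_zero] at hx'
              exact hx'
            have h15 := congrArg π h9
            rw [hπvK, map_zero] at h15
            exact hΦ.1 (by rw [h15, map_zero])
          calc x = ↑(π x) + ↑(ρ x) := (hπρ x).symm
            _ = 0 := by rw [hπx, hρx, ZeroMemClass.coe_zero, ZeroMemClass.coe_zero, add_zero]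
        have hvsurj : Function.Surjective v := by
          intro mm
          obtain ⟨k₀, hk₀⟩ := hΦ.2 (π mm - π (α ↑(ρ mm)))
          refine ⟨↑k₀ + ↑(ρ mm), ?_⟩
          rw [map_add]
          have hπ' : π (v ↑k₀ + v ↑(ρ mm)) = π mm := by
            rw [map_add, hπvK, hπvI, hk₀]
            abel
          have hρ' : ρ (v ↑k₀ + v ↑(ρ mm)) = ρ mm := by
            rw [map_add, hρvK, hρvI, zero_add]
          calc v ↑k₀ + v ↑(ρ mm)
              = ↑(π (v ↑k₀ + v ↑(ρ mm))) + ↑(ρ (v ↑k₀ + v ↑(ρ mm))) :=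
                (hπρ _).symm
            _ = ↑(π mm) + ↑(ρ mm) := by rw [hπ', hρ']
            _ = mm := hπρ mm
        -- conclude
        refine ⟨sh ∘ₗ ginv, ?_⟩
        have hcomp : ∀ x : M, (α + β ∘ₗ (sh ∘ₗ ginv)) (g x) = v x := by
          intro x
          simp only [LinearMap.add_apply, LinearMap.comp_apply]
          rw [hging, hvapp]
        have hfun : ⇑(α + β ∘ₗ (sh ∘ₗ ginv)) = ⇑v ∘ ⇑(gE.symm) := by
          funext x
          have h10 : g ((gE.symm : M ≃ₗ[R] M) x) = x := by
            have h11 := gE.apply_symm_apply x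
            rwa [hgE, LinearEquiv.ofLinear_apply] at h11
          calc (α + β ∘ₗ (sh ∘ₗ ginv)) x
              = (α + β ∘ₗ (sh ∘ₗ ginv)) (g ((gE.symm : M ≃ₗ[R] M) x)) := by rw [h10]
            _ = v ((gE.symm : M ≃ₗ[R] M) x) := hcomp _
            _ = (⇑v ∘ ⇑(gE.symm)) x := rfl
        rw [hfun]
        exact Function.Bijective.comp ⟨hvinj, hvsurj⟩ gE.symm.bijective

/-- Stable rank one (right version) for finite rings. -/
theorem exists_unit_right {S : Type u} [Ring S] [Finite S] {a c x y : S}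
    (h : x * a + y * c = 1) : ∃ s : S, IsUnit (a + s * c) := by
  set α : S →ₗ[S] S := LinearMap.toSpanSingleton S S a with hα
  set β : S →ₗ[S] S := LinearMap.toSpanSingleton S S c with hβ
  set ξ : S →ₗ[S] S := LinearMap.toSpanSingleton S S x with hξ
  set η : S →ₗ[S] S := LinearMap.toSpanSingleton S S y with hη
  have hEq : α ∘ₗ ξ + β ∘ₗ η = LinearMap.id := by
    apply LinearMap.ext; intro r
    simp only [LinearMap.add_apply, LinearMap.comp_apply, LinearMap.id_apply]
    rw [hα, hβ, hξ, hη]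
    simp only [LinearMap.toSpanSingleton_apply, smul_eq_mul]
    rw [mul_assoc, mul_assoc, ← mul_add, h, mul_one]
  obtain ⟨σ, hσ⟩ := key_aux (R := S) (M := S) (N := S) (Nat.card S) le_rfl α β ξ η hEq
  set s : S := σ 1 with hs
  have hσr : ∀ r : S, σ r = r * s := by
    intro r
    calc σ r = σ (r • (1 : S)) := by rw [smul_eq_mul, mul_one]
      _ = r • σ 1 := map_smul σ r 1
      _ = r * s := by rw [smul_eq_mul, hs]
  have hf : ∀ r : S, (α + β ∘ₗ σ) r = r * (a + s * c) := by
    intro r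
    simp only [LinearMap.add_apply, LinearMap.comp_apply]
    rw [hα, hβ]
    simp only [LinearMap.toSpanSingleton_apply, smul_eq_mul]
    rw [hσr, mul_add, mul_assoc]
  obtain ⟨zz, hzz⟩ := hσ.2 1
  have hz1 : zz * (a + s * c) = 1 := by rw [← hf]; exact hzz
  have hz2 : (a + s * c) * zz = 1 := by
    have h11 : (α + β ∘ₗ σ) ((a + s * c) * zz) = (α + β ∘ₗ σ) 1 := by
      rw [hf, hf, one_mul, mul_assoc, hz1, mul_one]
    exact hσ.1 h11
  exact ⟨s, ⟨⟨a + s * c, zz, hz2, hz1⟩, rfl⟩⟩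

/-- Stable rank one (left version) for finite rings. -/
theorem exists_unit_left {R : Type*} [Ring R] [Finite R] {a b x y : R}
    (h : a * x + b * y = 1) : ∃ t : R, IsUnit (a + b * t) := by
  have hop : (MulOpposite.op x) * (MulOpposite.op a) + (MulOpposite.op y) * (MulOpposite.op b)
      = 1 := by
    rw [← MulOpposite.op_mul, ← MulOpposite.op_mul, ← MulOpposite.op_add, h, MulOpposite.op_one]
  haveI : Finite Rᵐᵒᵖ := Finite.of_equiv R MulOpposite.opEquiv
  obtain ⟨s, hs⟩ := exists_unit_right hop
  refine ⟨MulOpposite.unop s, ?_⟩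
  have heq : MulOpposite.op a + s * MulOpposite.op b
      = MulOpposite.op (a + b * MulOpposite.unop s) := by
    rw [MulOpposite.op_add, MulOpposite.op_mul]
    simp
  rw [heq] at hs
  exact isUnit_op.mp hs

end KeyLemma

/-- In a finite ring with unity, a pair `(a,b)` is admissible
(extends to a row of an invertible 2×2 matrix) iff it is unimodular. -/
theorem admissible_iff_unimodular {R : Type*} [Ring R] [Fintype R] (a b : R) :
    (∃ c d : R, IsUnit !![a, b; c, d]) ↔ ∃ x y : R, a * x + b * y = 1 := by
  constructor
  · rintro ⟨c, d, hu⟩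
    obtain ⟨U, hU⟩ := hu
    have h1 : !![a, b; c, d] * U.inv = 1 := by
      rw [← hU]; exact U.val_inv
    refine ⟨U.inv 0 0, U.inv 1 0, ?_⟩
    have h2 : (!![a, b; c, d] * U.inv) 0 0 = (1 : Matrix (Fin 2) (Fin 2) R) 0 0 := by rw [h1]
    rw [Matrix.mul_apply, Fin.sum_univ_two, Matrix.one_apply_eq] at h2
    exact h2
  · rintro ⟨x, y, hxy⟩
    obtain ⟨t, ht⟩ := exists_unit_left hxy
    obtain ⟨U, hU⟩ := ht
    have hz1 : U.inv * (a + b * t) = 1 := by rw [← hU]; exact U.inv_val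
    have hz2 : (a + b * t) * U.inv = 1 := by rw [← hU]; exact U.val_inv
    set zz : R := U.inv with hzzdef
    have hkey : (a + b * t) * (zz * b) = b := by rw [← mul_assoc, hz2, one_mul]
    refine ⟨-t, 1, ?_⟩
    have e00 : a * zz + b * (t * zz) = 1 := by
      rw [← mul_assoc, ← add_mul]; exact hz2
    have e01 : a * -(zz * b) + b * (1 - t * (zz * b)) = 0 := by
      calc a * -(zz * b) + b * (1 - t * (zz * b))
          = b - (a + b * t) * (zz * b) := by noncomm_ring
        _ = 0 := by rw [hkey, sub_self]
    have e10 : -t * zz + 1 * (t * zz) = 0 := by noncomm_ring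
    have e11 : -t * -(zz * b) + 1 * (1 - t * (zz * b)) = 1 := by noncomm_ring
    have f00 : zz * a + -(zz * b) * -t = 1 := by
      calc zz * a + -(zz * b) * -t = zz * (a + b * t) := by noncomm_ring
        _ = 1 := hz1
    have f01 : zz * b + -(zz * b) * 1 = 0 := by noncomm_ring
    have f10 : t * zz * a + (1 - t * (zz * b)) * -t = 0 := by
      calc t * zz * a + (1 - t * (zz * b)) * -t
          = t * (zz * (a + b * t)) - t := by noncomm_ring
        _ = 0 := by rw [hz1, mul_one, sub_self]
    have f11 : t * zz * b + (1 - t * (zz * b)) * 1 = 1 := by noncomm_ring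
    have hAB : !![a, b; -t, 1] * !![zz, -(zz * b); t * zz, 1 - t * (zz * b)] = 1 := by
      rw [Matrix.mul_fin_two, e00, e01, e10, e11]
      exact Matrix.one_fin_two.symm
    have hBA : !![zz, -(zz * b); t * zz, 1 - t * (zz * b)] * !![a, b; -t, 1] = 1 := by
      rw [Matrix.mul_fin_two, f00, f01, f10, f11]
      exact Matrix.one_fin_two.symm
    exact ⟨⟨!![a, b; -t, 1], !![zz, -(zz * b); t * zz, 1 - t * (zz * b)], hAB, hBA⟩, rfl⟩
end

section
/- For a,b in a finite ring R with Jacobson radical J, the submodule R(a,b) is a point of the projective line P(R) if and only if (R/J)(ā, b̄) is a point of the projective line P(R/J), where ā, b̄ denote images under the canonical epimorphism R → R/J. -/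
open Matrix

/-- In a finite monoid, a right inverse is a two-sided inverse. -/
lemma aux_mul_eq_one_symm {M : Type*} [Monoid M] [Finite M] {a b : M}
    (h : a * b = 1) : b * a = 1 := by
  have hinj : Function.Injective (fun x : M => b * x) := by
    intro x y hxy
    have := congrArg (a * ·) hxy
    simpa [← mul_assoc, h] using this
  obtain ⟨c, hc⟩ := (Finite.injective_iff_surjective.mp hinj) 1
  have hac : a = c := by
    have hc' : b * c = 1 := hc
    calc a = a * (b * c) := by rw [hc', mul_one]
    _ = (a * b) * c := by rw [mul_assoc]
    _ = c := by rw [h, one_mul]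
  rw [hac]; exact hc

lemma aux_isUnit_of_mul_eq_one {M : Type*} [Monoid M] [Finite M] {a b : M}
    (h : a * b = 1) : IsUnit a :=
  ⟨⟨a, b, h, aux_mul_eq_one_symm h⟩, rfl⟩

/-- upper triangular with unit diagonal is a unit -/
lemma aux_tri {R : Type*} [Ring R] (u w : Rˣ) (x : R) : IsUnit !![(u:R), x; 0, (w:R)] := by
  refine ⟨⟨_, !![(↑u⁻¹:R), -(↑u⁻¹ * x * ↑w⁻¹); 0, (↑w⁻¹:R)], ?_, ?_⟩, rfl⟩ <;>
  · rw [Matrix.mul_fin_two]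
    ext i j
    fin_cases i <;> fin_cases j <;>
      simp [mul_assoc, Matrix.one_apply]




lemma aux_vecMul_single {R : Type*} [Ring R] (r : R) (M : Matrix (Fin 2) (Fin 2) R) :
    ![r, 0] ᵥ* M = r • M 0 := by
  funext j
  simp [Matrix.vecMul, dotProduct, Fin.sum_univ_two]

lemma aux_mulGL_span {R : Type*} [Ring R] (g : (Matrix (Fin 2) (Fin 2) R)ˣ) (x y : R) :
    mulGL R g (ptSub R x y) = Submodule.span R {![x, y] ᵥ* g.val} := by
  rw [mulGL, ptSub, Submodule.map_span, Set.image_singleton, Matrix.vecMulLinear_apply]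

lemma aux_char {R : Type*} [Ring R] [Fintype R] (a b : R) :
    ptSub R a b ∈ projLine R ↔ ∃ G : (Matrix (Fin 2) (Fin 2) R)ˣ, G.val 0 = ![a, b] := by
  constructor
  · rintro ⟨g, hg⟩
    rw [aux_mulGL_span, aux_vecMul_single, one_smul] at hg
    set v : Fin 2 → R := g.val 0 with hv
    have hg' : Submodule.span R {v} = Submodule.span R {![a, b]} := hg
    have hab : ![a, b] ∈ Submodule.span R {v} := by
      rw [hg']; exact Submodule.mem_span_singleton_self _
    have hvm : v ∈ Submodule.span R {![a, b]} := by
      rw [← hg']; exact Submodule.mem_span_singleton_self _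
    obtain ⟨t, ht⟩ := Submodule.mem_span_singleton.mp hab
    obtain ⟨s, hs⟩ := Submodule.mem_span_singleton.mp hvm
    have hst : (1 - s * t) • v = 0 := by
      rw [sub_smul, one_smul, mul_smul, ht, hs, sub_self]
    have hzero : ![1 - s * t, 0] ᵥ* g.val = 0 := by
      rw [aux_vecMul_single, hst]
    have h1 : (1 : R) - s * t = 0 := by
      have := congrArg (fun w => w ᵥ* (g⁻¹ : (Matrix (Fin 2) (Fin 2) R)ˣ).val) hzero
      simp only [Matrix.vecMul_vecMul] at this
      rw [show g.val * (g⁻¹ : (Matrix (Fin 2) (Fin 2) R)ˣ).val = 1 from g.mul_inv,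
        Matrix.vecMul_one, Matrix.zero_vecMul] at this
      exact congrFun this 0
    have hst1 : s * t = 1 := by linear_combination (norm := abel) -h1
    have hts1 : t * s = 1 := aux_mul_eq_one_symm hst1
    refine ⟨(⟨!![t, 0; 0, 1], !![s, 0; 0, 1], ?_, ?_⟩ : (Matrix (Fin 2) (Fin 2) R)ˣ) * g, ?_⟩
    · rw [Matrix.mul_fin_two]; norm_num [hts1, ← Matrix.one_fin_two]
    · rw [Matrix.mul_fin_two]; norm_num [hst1, ← Matrix.one_fin_two]
    · funext j
      have : (!![t, 0; 0, 1] * g.val) 0 j = t * v j := by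
        simp [Matrix.mul_apply, Fin.sum_univ_two, hv]
      rw [Units.val_mul]
      rw [this, ← congrFun ht j]
      simp
  · rintro ⟨G, hG⟩
    exact ⟨G, by rw [aux_mulGL_span, aux_vecMul_single, one_smul, hG, ptSub]⟩

lemma aux_tri_low {R : Type*} [Ring R] (x : R) : IsUnit !![(1:R), 0; x, 1] := by
  refine ⟨⟨_, !![(1:R), 0; -x, 1], ?_, ?_⟩, rfl⟩ <;>
  · rw [Matrix.mul_fin_two]
    ext i j
    fin_cases i <;> fin_cases j <;> simp [Matrix.one_apply]

lemma aux_two_by_two {R : Type*} [Ring R] (u w : Rˣ) (q p r : R)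
    (hw : (w : R) = r - p * ↑u⁻¹ * q) : IsUnit !![(u:R), q; p, r] := by
  have hL : IsUnit !![(1:R), 0; -(p * ↑u⁻¹), 1] := aux_tri_low _
  have hprod : !![(1:R), 0; -(p * ↑u⁻¹), 1] * !![(u:R), q; p, r] = !![(u:R), q; 0, (w:R)] := by
    rw [Matrix.mul_fin_two]
    ext i j
    fin_cases i <;> fin_cases j <;> simp [mul_assoc]
    · rw [hw, mul_assoc, neg_add_eq_sub]
  have h2 : IsUnit (!![(1:R), 0; -(p * ↑u⁻¹), 1] * !![(u:R), q; p, r]) := by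
    rw [hprod]; exact aux_tri u w q
  obtain ⟨L, hLu⟩ := hL
  have h3 := (L⁻¹).isUnit.mul h2
  rwa [← mul_assoc, ← hLu, Units.inv_mul, one_mul] at h3

lemma aux_unit_of_map_one {R S : Type*} [Ring R] [Ring S] (π : R →+* S)
    (hker : ∀ a : R, π a = 0 ↔ ∀ y : R, IsUnit (1 - y * a))
    (A : Matrix (Fin 2) (Fin 2) R) (h : A.map π = 1) : IsUnit A := by
  have hu : ∀ x : R, π x = 1 → IsUnit x := by
    intro x hx
    have h0 : π (x - 1) = 0 := by rw [map_sub, hx, _root_.map_one, sub_self]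
    have := (hker _).mp h0 (-1)
    rwa [show (1:R) - (-1) * (x - 1) = x by noncomm_ring] at this
  have hent : ∀ i j, π (A i j) = (1 : Matrix (Fin 2) (Fin 2) S) i j := by
    intro i j
    have := congrFun (congrFun h i) j
    simpa [Matrix.map_apply] using this
  have h00 : π (A 0 0) = 1 := by simpa [Matrix.one_apply] using hent 0 0
  have h01 : π (A 0 1) = 0 := by simpa [Matrix.one_apply] using hent 0 1
  have h10 : π (A 1 0) = 0 := by simpa [Matrix.one_apply] using hent 1 0
  have h11 : π (A 1 1) = 1 := by simpa [Matrix.one_apply] using hent 1 1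
  set u := (hu _ h00).unit with hu_def
  have hwv : π (A 1 1 - A 1 0 * ↑u⁻¹ * A 0 1) = 1 := by
    rw [map_sub, h11, _root_.map_mul, _root_.map_mul, h10, zero_mul, zero_mul, sub_zero]
  set w := (hu _ hwv).unit with hw_def
  have key := aux_two_by_two u w (A 0 1) (A 1 0) (A 1 1) (IsUnit.unit_spec _)
  have hu0 : (u : R) = A 0 0 := IsUnit.unit_spec _
  rwa [hu0, ← Matrix.eta_fin_two A] at key

/-- Let `π : R → R/J` be the canonical surjection onto the quotient by the
Jacobson radical (its kernel is characterized by `a ∈ J ↔ ∀ y, 1 - y*a` is a unit).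
Then `R(a,b)` is a point of `P(R)` iff `(R/J)(ā,b̄)` is a point of `P(R/J)`. -/
theorem point_iff_point_mod_jacobson {R S : Type*} [Ring R] [Ring S] [Fintype R] [Fintype S]
    (π : R →+* S) (hsurj : Function.Surjective π)
    (hker : ∀ a : R, π a = 0 ↔ ∀ y : R, IsUnit (1 - y * a)) (a b : R) :
    ptSub R a b ∈ projLine R ↔ ptSub S (π a) (π b) ∈ projLine S := by
  rw [aux_char, aux_char]
  constructor
  · rintro ⟨G, hG⟩
    refine ⟨Units.map (RingHom.mapMatrix π).toMonoidHom G, ?_⟩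
    funext j
    show ((RingHom.mapMatrix π) G.val) 0 j = ![π a, π b] j
    rw [RingHom.mapMatrix_apply]
    have : G.val 0 j = ![a, b] j := congrFun hG j
    fin_cases j <;> simp [Matrix.map_apply, this] <;>
      simpa using congrArg π this
  · rintro ⟨H, hH⟩
    obtain ⟨c, hc⟩ := hsurj (H.val 1 0)
    obtain ⟨d, hd⟩ := hsurj (H.val 1 1)
    set A : Matrix (Fin 2) (Fin 2) R := !![a, b; c, d] with hA
    have hmap : A.map π = H.val := by
      ext i j
      fin_cases i <;> fin_cases j <;>
        simp [hA, Matrix.map_apply, hc, hd] <;>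
        · have := congrFun hH
          first
          | simpa using (this 0).symm
          | simpa using (this 1).symm
    have hB : ∃ B : Matrix (Fin 2) (Fin 2) R, B.map π = (H⁻¹).val := by
      refine ⟨Matrix.of fun i j => (hsurj ((H⁻¹).val i j)).choose, ?_⟩
      ext i j
      exact (hsurj ((H⁻¹).val i j)).choose_spec
    obtain ⟨B, hBmap⟩ := hB
    have hABmap : (A * B).map π = 1 := by
      rw [show (A * B).map π = A.map π * B.map π from Matrix.map_mul,
        hmap, hBmap, H.mul_inv]
    have hunit : IsUnit (A * B) := aux_unit_of_map_one π hker _ hABmap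
    obtain ⟨U, hU⟩ := hunit
    have hright : A * (B * U.inv) = 1 := by
      rw [← mul_assoc, ← hU]
      exact U.mul_inv
    have hAunit : IsUnit A := aux_isUnit_of_mul_eq_one hright
    refine ⟨hAunit.unit, ?_⟩
    rw [IsUnit.unit_spec]
    funext j
    fin_cases j <;> simp [hA]
end

section
/- The distant graph G(R,Δ) of the projective line over a finite ring R with unity is connected with diameter at most 2. -/
/-!
Moving `p` to `R(1,0)` by `GL₂(R)`, the point `q` becomes the span of the first row `C₀` of an
invertible matrix `C`. The second column of `C` is left unimodular, so if `R` has left stable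
range one there is `t` with `t C₀₁ + C₁₁` a unit. The row `w = t C₀ + C₁` spans a common
neighbour of `p` and `q`: `C₀, w` are the rows of the invertible matrix `!![1, 0; t, 1] * C`,
and `(1, 0), w` are the rows of an invertible matrix because `w₁` is a unit.

Finite rings have left stable range one by way of Warfield's substitution property of modules.
It holds for `M` as soon as `End M` has stable range one, it passes to finite direct sums, and
for the regular module `R` it is left stable range one of `R`. A finite module either splits
into two smaller summands or is indecomposable, and then, by Fitting's lemma, every
endomorphism is nilpotent or invertible, which yields stable range one of `End M` at once.
-/

open Matrix

universe u

/-- Bass's condition `sr(R) = 1`, for left unimodular pairs. -/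
def HasLeftStableRangeOne (R : Type*) [Ring R] : Prop :=
  ∀ a b x y : R, x * a + y * b = 1 → ∃ t, IsUnit (a + t * b)

/-- Warfield's substitution property, with the two decompositions `X = M ⊕ _` given by the split
epimorphisms `πᵢ` and their sections `σᵢ`. -/
def HasSubstitution (R : Type*) [Ring R] (M : Type u) [AddCommGroup M] [Module R M] : Prop :=
  ∀ (X : Type u) [AddCommGroup X] [Module R X] (π₁ π₂ : X →ₗ[R] M) (σ₁ σ₂ : M →ₗ[R] X),
    π₁ ∘ₗ σ₁ = LinearMap.id → π₂ ∘ₗ σ₂ = LinearMap.id →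
    ∃ σ : M →ₗ[R] X, IsUnit (π₁ ∘ₗ σ) ∧ IsUnit (π₂ ∘ₗ σ)

section Substitution

open LinearMap

variable {R : Type*} [Ring R]

section Module

variable {M N : Type u} [AddCommGroup M] [Module R M] [AddCommGroup N] [Module R N]

theorem hasSubstitution_of_forall_isUnit_add_mul
    (H : ∀ a w d : Module.End R M, a * w + d = 1 → ∃ t, IsUnit (a + d * t)) :
    HasSubstitution R M := by
  intro X _ _ π₁ π₂ σ₁ σ₂ h₁ h₂
  obtain ⟨t, ht⟩ := H (π₂ ∘ₗ σ₁) (π₁ ∘ₗ σ₂) _ (add_sub_cancel _ 1)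
  -- `π₁ ∘ σ = 1` and `π₂ ∘ σ = a + (1 - a w) t` for `a = π₂ σ₁`, `w = π₁ σ₂`.
  refine ⟨σ₁ + (σ₂ - σ₁ ∘ₗ π₁ ∘ₗ σ₂) ∘ₗ t, ?_, ?_⟩
  · convert isUnit_one
    simp only [comp_add, sub_comp, comp_sub, ← comp_assoc, h₁, id_comp, sub_self, add_zero]
    rfl
  · convert ht using 1
    simp only [comp_add, sub_comp, comp_sub, ← comp_assoc, h₂, id_comp, Module.End.mul_eq_comp,
      Module.End.one_eq_id]

theorem HasSubstitution.of_linearEquiv (e : M ≃ₗ[R] N) (h : HasSubstitution R M) :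
    HasSubstitution R N := by
  intro X _ _ π₁ π₂ σ₁ σ₂ h₁ h₂
  have hsec {π : X →ₗ[R] N} {σ : N →ₗ[R] X} (hπ : π ∘ₗ σ = LinearMap.id) :
      (e.symm.toLinearMap ∘ₗ π) ∘ₗ (σ ∘ₗ e.toLinearMap) = LinearMap.id := by
    ext x; simpa using congr(e.symm ($hπ (e x)))
  have hunit {π : X →ₗ[R] N} {σ : M →ₗ[R] X} (hu : IsUnit (e.symm.toLinearMap ∘ₗ π ∘ₗ σ)) :
      IsUnit (π ∘ₗ σ ∘ₗ e.symm.toLinearMap) := by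
    rw [Module.End.isUnit_iff] at hu ⊢
    convert e.bijective.comp (hu.comp e.symm.bijective) using 1
    ext; simp
  obtain ⟨σ, hu₁, hu₂⟩ := h X _ _ _ _ (hsec h₁) (hsec h₂)
  exact ⟨σ ∘ₗ e.symm.toLinearMap, hunit hu₁, hunit hu₂⟩

end Module

section Prod

variable {M₁ M₂ X : Type u} [AddCommGroup M₁] [Module R M₁] [AddCommGroup M₂] [Module R M₂]
  [AddCommGroup X] [Module R X]

/-- For `u = fst ∘ π ∘ σ` invertible, `id - σ ∘ u⁻¹ ∘ fst ∘ π` is the projection of `X` onto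
`ker (fst ∘ π)` along `range σ`; this is the `M₂`-component of `π` after that projection. -/
noncomputable def sndCompl (π : X →ₗ[R] M₁ × M₂) (σ : M₁ →ₗ[R] X) : X →ₗ[R] M₂ :=
  snd R M₁ M₂ ∘ₗ π ∘ₗ
    (LinearMap.id - σ ∘ₗ Ring.inverse (fst R M₁ M₂ ∘ₗ π ∘ₗ σ) ∘ₗ fst R M₁ M₂ ∘ₗ π)

theorem sndCompl_comp_inr {π : X →ₗ[R] M₁ × M₂} {σ₀ : M₁ × M₂ →ₗ[R] X}
    (h : π ∘ₗ σ₀ = LinearMap.id) (σ : M₁ →ₗ[R] X) :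
    sndCompl π σ ∘ₗ σ₀ ∘ₗ inr R M₁ M₂ = LinearMap.id := by
  ext y
  have hy : π (σ₀ (0, y)) = (0, y) := congr($h (0, y))
  simp [sndCompl, hy]

theorem surjective_comp_coprod {π : X →ₗ[R] M₁ × M₂} {σ : M₁ →ₗ[R] X} {τ : M₂ →ₗ[R] X}
    (hu : IsUnit (fst R M₁ M₂ ∘ₗ π ∘ₗ σ)) (hτ : Function.Surjective (sndCompl π σ ∘ₗ τ)) :
    Function.Surjective (π ∘ₗ σ.coprod τ) := by
  set v := Ring.inverse (fst R M₁ M₂ ∘ₗ π ∘ₗ σ) with hv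
  have huv (z : M₁) : (π (σ (v z))).1 = z := congr($(Ring.mul_inverse_cancel _ hu) z)
  -- Block elimination: solve for the `M₂`-coordinate first, then for the `M₁`-coordinate.
  rintro ⟨z₁, z₂⟩
  obtain ⟨y, hy⟩ := hτ (z₂ - (π (σ (v z₁))).2)
  refine ⟨(v (z₁ - (π (τ y)).1), y), ?_⟩
  simp only [sndCompl, ← hv, LinearMap.comp_apply, LinearMap.sub_apply, id_apply, map_sub,
    snd_apply, fst_apply] at hy
  rw [sub_eq_sub_iff_add_eq_add] at hy
  ext
  · simp [huv]
  · simp only [coprod_apply, LinearMap.comp_apply, map_add, map_sub, Prod.snd_add, Prod.snd_sub]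
    rw [sub_add_eq_add_sub, add_comm, hy, add_sub_cancel_right]

theorem HasSubstitution.prod [Finite M₁] [Finite M₂] (h₁ : HasSubstitution R M₁)
    (h₂ : HasSubstitution R M₂) : HasSubstitution R (M₁ × M₂) := by
  intro X _ _ π₁ π₂ σ₁ σ₂ hσ₁ hσ₂
  have hfst {π : X →ₗ[R] M₁ × M₂} {σ₀ : M₁ × M₂ →ₗ[R] X} (h : π ∘ₗ σ₀ = LinearMap.id) :
      (fst R M₁ M₂ ∘ₗ π) ∘ₗ (σ₀ ∘ₗ inl R M₁ M₂) = LinearMap.id := by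
    ext x; simpa using congr(($h (x, 0)).1)
  obtain ⟨σ, hu₁, hu₂⟩ := h₁ X _ _ _ _ (hfst hσ₁) (hfst hσ₂)
  obtain ⟨τ, hv₁, hv₂⟩ := h₂ X (sndCompl π₁ σ) (sndCompl π₂ σ) _ _
    (sndCompl_comp_inr hσ₁ σ) (sndCompl_comp_inr hσ₂ σ)
  have hunit {π : X →ₗ[R] M₁ × M₂} (hu : IsUnit (fst R M₁ M₂ ∘ₗ π ∘ₗ σ))
      (hv : IsUnit (sndCompl π σ ∘ₗ τ)) : IsUnit (π ∘ₗ σ.coprod τ) := by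
    rw [Module.End.isUnit_iff, ← Finite.surjective_iff_bijective] at hv ⊢
    exact surjective_comp_coprod hu hv
  exact ⟨σ.coprod τ, hunit hu₁ hv₁, hunit hu₂ hv₂⟩

end Prod

theorem exists_isUnit_add_mul_of_isNilpotent_or_isUnit {E : Type*} [Ring E]
    [IsDedekindFiniteMonoid E] (hE : ∀ x : E, IsNilpotent x ∨ IsUnit x) {a w d : E}
    (h : a * w + d = 1) : ∃ t, IsUnit (a + d * t) := by
  rcases hE (a * w) with hnil | hunit
  · have hd : IsUnit d := by rw [eq_sub_of_add_eq' h]; exact hnil.isUnit_one_sub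
    refine ⟨Ring.inverse d * (1 - a), ?_⟩
    rw [← mul_assoc, Ring.mul_inverse_cancel d hd, one_mul, add_sub_cancel]
    exact isUnit_one
  · exact ⟨0, by simpa using isUnit_of_mul_isUnit_left hunit⟩

theorem Module.End.isNilpotent_or_isUnit_of_indecomposable {M : Type*} [AddCommGroup M]
    [Module R M] [Finite M] (hM : ∀ N N' : Submodule R M, IsCompl N N' → N = ⊤ ∨ N' = ⊤)
    (f : Module.End R M) : IsNilpotent f ∨ IsUnit f := by
  obtain ⟨n, hn, hc⟩ :=
    ((Filter.eventually_ge_atTop 1).and f.eventually_isCompl_ker_pow_range_pow).exists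
  rcases hM _ _ hc with hker | hrange
  · exact Or.inl ⟨n, LinearMap.ker_eq_top.mp hker⟩
  · refine Or.inr ((isUnit_pow_iff (n := n) (by omega)).mp ?_)
    rw [Module.End.isUnit_iff, ← Finite.surjective_iff_bijective]
    exact LinearMap.range_eq_top.mp hrange

theorem Submodule.card_lt_of_ne_top {M : Type*} [AddCommGroup M] [Module R M] [Finite M]
    {N : Submodule R M} (h : N ≠ ⊤) : Nat.card N < Nat.card M :=
  Set.ncard_lt_card (s := (N : Set M)) (by simpa using h)

theorem hasSubstitution_of_finite (M : Type u) [AddCommGroup M] [Module R M] [Finite M] :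
    HasSubstitution R M := by
  induction h : Nat.card M using Nat.strong_induction_on generalizing M with
  | _ n ih =>
  by_cases hM : ∀ N N' : Submodule R M, IsCompl N N' → N = ⊤ ∨ N' = ⊤
  · have : Finite (Module.End R M) := Finite.of_injective _ DFunLike.coe_injective
    exact hasSubstitution_of_forall_isUnit_add_mul fun _ _ _ =>
      exists_isUnit_add_mul_of_isNilpotent_or_isUnit
        (Module.End.isNilpotent_or_isUnit_of_indecomposable hM)
  · push Not at hM
    obtain ⟨N, N', hc, hN, hN'⟩ := hM
    have hsN := ih _ (h ▸ Submodule.card_lt_of_ne_top hN) N rfl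
    have hsN' := ih _ (h ▸ Submodule.card_lt_of_ne_top hN') N' rfl
    exact (hsN.prod hsN').of_linearEquiv (Submodule.prodEquivOfIsCompl N N' hc)

theorem Module.End.isUnit_apply_one {f : Module.End R R} (hf : IsUnit f) : IsUnit (f 1) :=
  isUnit_op.mp (hf.map (RingEquiv.moduleEndSelf R).symm)

theorem HasSubstitution.hasLeftStableRangeOne (h : HasSubstitution R R) :
    HasLeftStableRangeOne R := by
  intro a b x y hxy
  obtain ⟨σ, hu₁, hu₂⟩ := h (R × R) ((toSpanSingleton R R a).coprod (toSpanSingleton R R b))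
    (fst R R R) ((toSpanSingleton R R x).prod (toSpanSingleton R R y)) (inl R R R)
    (by ext; simp [hxy]) (by ext; simp)
  obtain ⟨c, hc⟩ := Module.End.isUnit_apply_one hu₂
  have hz := Module.End.isUnit_apply_one hu₁
  simp only [LinearMap.comp_apply, coprod_apply, toSpanSingleton_apply, smul_eq_mul] at hz
  simp only [LinearMap.comp_apply, fst_apply] at hc
  refine ⟨↑c⁻¹ * (σ 1).2, ?_⟩
  have : a + ↑c⁻¹ * (σ 1).2 * b = ↑c⁻¹ * ((σ 1).1 * a + (σ 1).2 * b) := by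
    rw [mul_add, ← mul_assoc, ← mul_assoc, ← hc, Units.inv_mul, one_mul]
  rw [this]
  exact c⁻¹.isUnit.mul hz

end Substitution

section DistantGraph

open Submodule

variable {R : Type*} [Ring R]

def swapGL : (Matrix (Fin 2) (Fin 2) R)ˣ where
  val := !![0, 1; 1, 0]
  inv := !![0, 1; 1, 0]
  val_inv := by simp [Matrix.one_fin_two]
  inv_val := by simp [Matrix.one_fin_two]

def lowerGL (t : R) : (Matrix (Fin 2) (Fin 2) R)ˣ where
  val := !![1, 0; t, 1]
  inv := !![1, 0; -t, 1]
  val_inv := by simp [Matrix.one_fin_two]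
  inv_val := by simp [Matrix.one_fin_two]

theorem mulGL_mul (g h : (Matrix (Fin 2) (Fin 2) R)ˣ) (p : Submodule R (Fin 2 → R)) :
    mulGL R (g * h) p = mulGL R h (mulGL R g p) := by
  rw [mulGL, mulGL, mulGL, ← map_comp]
  congr 1
  exact LinearMap.ext fun v => by simp [Matrix.vecMul_vecMul]

theorem mulGL_span_singleton (g : (Matrix (Fin 2) (Fin 2) R)ˣ) (v : Fin 2 → R) :
    mulGL R g (span R {v}) = span R {v ᵥ* g} := by
  simp [mulGL, Submodule.map_span]

theorem mulGL_ptSub_one_zero (g : (Matrix (Fin 2) (Fin 2) R)ˣ) :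
    mulGL R g (ptSub R 1 0) = span R {g.val 0} := by
  rw [ptSub, mulGL_span_singleton]
  congr
  ext j; simp [Matrix.vecMul, dotProduct, Fin.sum_univ_two]

theorem mulGL_ptSub_zero_one (g : (Matrix (Fin 2) (Fin 2) R)ˣ) :
    mulGL R g (ptSub R 0 1) = span R {g.val 1} := by
  rw [ptSub, mulGL_span_singleton]
  congr
  ext j; simp [Matrix.vecMul, dotProduct, Fin.sum_univ_two]

theorem isDistant_span_row (g : (Matrix (Fin 2) (Fin 2) R)ˣ) :
    IsDistant R (span R {g.val 0}) (span R {g.val 1}) :=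
  ⟨g, mulGL_ptSub_one_zero g, mulGL_ptSub_zero_one g⟩

theorem IsDistant.symm {p q : Submodule R (Fin 2 → R)} (h : IsDistant R p q) :
    IsDistant R q p := by
  obtain ⟨g, rfl, rfl⟩ := h
  refine ⟨swapGL * g, ?_, ?_⟩ <;> rw [mulGL_mul]
  · rw [mulGL_ptSub_one_zero]; rfl
  · rw [mulGL_ptSub_zero_one]; rfl

theorem IsDistant.mulGL {p q : Submodule R (Fin 2 → R)} (h : IsDistant R p q)
    (g : (Matrix (Fin 2) (Fin 2) R)ˣ) : IsDistant R (mulGL R g p) (mulGL R g q) := by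
  obtain ⟨h, rfl, rfl⟩ := h
  exact ⟨h * g, mulGL_mul h g _, mulGL_mul h g _⟩

theorem IsDistant.right_mem_projLine {p q : Submodule R (Fin 2 → R)} (h : IsDistant R p q) :
    q ∈ projLine R :=
  let ⟨g, hg, _⟩ := h.symm; ⟨g, hg⟩

theorem isDistant_ptSub_span_of_isUnit {v : Fin 2 → R} (hv : IsUnit (v 1)) :
    IsDistant R (ptSub R 1 0) (span R {v}) := by
  obtain ⟨u, hu⟩ := hv
  have hvu : v = (u : R) • ![↑u⁻¹ * v 0, 1] := by
    ext i; fin_cases i <;> simp [← hu, ← mul_assoc]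
  refine ⟨lowerGL (↑u⁻¹ * v 0), ?_, ?_⟩
  · rw [mulGL_ptSub_one_zero]; rfl
  · rw [mulGL_ptSub_zero_one]
    conv_rhs => rw [hvu, span_singleton_smul_eq u.isUnit]
    rfl

theorem exists_isDistant_ptSub_isDistant_mulGL (hR : HasLeftStableRangeOne R)
    (C : (Matrix (Fin 2) (Fin 2) R)ˣ) :
    ∃ r, IsDistant R (ptSub R 1 0) r ∧ IsDistant R r (mulGL R C (ptSub R 1 0)) := by
  have hCC : (C⁻¹ * C : Matrix (Fin 2) (Fin 2) R) 1 1 = 1 := by simp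
  rw [Matrix.mul_apply, Fin.sum_univ_two] at hCC
  obtain ⟨t, ht⟩ := hR _ _ _ _ ((add_comm _ _).trans hCC)
  let M := lowerGL t * C
  refine ⟨span R {M.val 1}, isDistant_ptSub_span_of_isUnit ?_, ?_⟩
  · simpa [M, lowerGL, Matrix.mul_apply, Fin.sum_univ_two, add_comm] using ht
  · rw [mulGL_ptSub_one_zero]
    convert (isDistant_span_row M).symm using 3
    ext j; simp [M, lowerGL, Matrix.mul_apply, Fin.sum_univ_two]

end DistantGraph

theorem distant_graph_connected_diam_le_two_general {R : Type*} [Ring R] [Fintype R]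
    (p q : Submodule R (Fin 2 → R)) (hp : p ∈ projLine R) (hq : q ∈ projLine R) :
    IsDistant R p q ∨ ∃ r ∈ projLine R, IsDistant R p r ∧ IsDistant R r q := by
  obtain ⟨A, rfl⟩ := hp
  obtain ⟨B, rfl⟩ := hq
  obtain ⟨r, hpr, hrq⟩ := exists_isDistant_ptSub_isDistant_mulGL
    (hasSubstitution_of_finite R).hasLeftStableRangeOne (B * A⁻¹)
  have hB : mulGL R A (mulGL R (B * A⁻¹) (ptSub R 1 0)) = mulGL R B (ptSub R 1 0) := by
    rw [← mulGL_mul, inv_mul_cancel_right]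
  exact Or.inr ⟨mulGL R A r, (hpr.mulGL A).right_mem_projLine, hpr.mulGL A, hB ▸ hrq.mulGL A⟩

/-- The distant graph `G(R,Δ)` is connected with diameter at most `2`:
any two distinct points are distant or have a common distant neighbour. -/
theorem distant_graph_connected_diam_le_two {R : Type*} [Ring R] [Fintype R]
    (p q : Submodule R (Fin 2 → R)) (hp : p ∈ projLine R) (hq : q ∈ projLine R)
    (hpq : p ≠ q) :
    IsDistant R p q ∨ ∃ r ∈ projLine R, IsDistant R p r ∧ IsDistant R r q :=
  distant_graph_connected_diam_le_two_general p q hp hq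
end

section
/- If G₁ and G₂ are graphs whose vertex sets are each partitioned into vertex-disjoint maximal cliques of constant sizes s₁ and s₂ respectively (with m₁ and m₂ cliques), and s₁ ≤ s₂, then the tensor (categorical) product G₁ × G₂ admits a partition of its vertex set into m₁·m₂·s₂ vertex-disjoint cliques each of size s₁. -/
/-!
Number the vertices of each clique of `G₁` by `g₁ : V₁ → Fin s₂` (injectively, as `s₁ ≤ s₂`)
and those of each clique of `G₂` by `g₂ : V₂ → Fin s₂` (bijectively). For cliques `C₁` of `G₁`,
`C₂` of `G₂` and a shift `k ∈ ℤ/s₂ℤ`, the pairs `(v, w) ∈ C₁ × C₂` with `g₂ w - g₁ v = k` form a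
clique of `G₁ × G₂`: a fixed shift forces two distinct pairs to differ in both coordinates.
Each `v ∈ C₁` lies in exactly one such pair, so these `m₁ m₂ s₂` cliques partition the product
and all have size `s₁`.
-/

/-- The tensor (categorical) product of two simple graphs. -/
def tensorGraph {V₁ V₂ : Type*} (G₁ : SimpleGraph V₁) (G₂ : SimpleGraph V₂) :
    SimpleGraph (V₁ × V₂) where
  Adj a b := G₁.Adj a.1 b.1 ∧ G₂.Adj a.2 b.2
  symm := ⟨fun _ _ h => ⟨h.1.symm, h.2.symm⟩⟩
  loopless := ⟨fun a h => G₁.loopless.irrefl a.1 h.1⟩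

open Function

theorem exists_bijective_prod_fin_of_ncard_fiber {V ι : Type*} (f : V → ι) {n : ℕ}
    (hfin : ∀ i, {v | f v = i}.Finite) (hcard : ∀ i, {v | f v = i}.ncard = n) :
    ∃ g : V → Fin n, Bijective fun v => (f v, g v) := by
  let e : ∀ i, {v // f v = i} ≃ Fin n := fun i =>
    have := (hfin i).to_subtype
    Finite.equivFinOfCardEq (α := {v | f v = i}) (hcard i)
  let E : V ≃ ι × Fin n :=
    (Equiv.sigmaFiberEquiv f).symm.trans
      ((Equiv.sigmaCongrRight e).trans (Equiv.sigmaEquivProd _ _))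
  exact ⟨fun v => (E v).2, E.bijective⟩

theorem isEmpty_of_ncard_fiber_eq_zero {V ι : Type*} [Finite V] (f : V → ι)
    (hcard : ∀ i, {v | f v = i}.ncard = 0) : IsEmpty V :=
  ⟨fun v => ((Set.ncard_eq_zero (Set.toFinite _)).mp (hcard (f v))).subset rfl⟩

section TensorCliques

variable {V₁ V₂ ι₁ ι₂ K : Type*} [AddCommGroup K]

def tensorCliqueIndex (f₁ : V₁ → ι₁) (g₁ : V₁ → K) (f₂ : V₂ → ι₂) (g₂ : V₂ → K) :
    V₁ × V₂ → (ι₁ × ι₂) × K :=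
  fun p => ((f₁ p.1, f₂ p.2), g₂ p.2 - g₁ p.1)

theorem isClique_tensorGraph_fiber_tensorCliqueIndex {G₁ : SimpleGraph V₁} {G₂ : SimpleGraph V₂}
    {f₁ : V₁ → ι₁} {g₁ : V₁ → K} {f₂ : V₂ → ι₂} {g₂ : V₂ → K}
    (hc₁ : ∀ c, G₁.IsClique {v | f₁ v = c}) (hc₂ : ∀ c, G₂.IsClique {w | f₂ w = c})
    (hg₁ : Injective fun v => (f₁ v, g₁ v)) (hg₂ : Injective fun w => (f₂ w, g₂ w))
    (d : (ι₁ × ι₂) × K) :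
    (tensorGraph G₁ G₂).IsClique {p | tensorCliqueIndex f₁ g₁ f₂ g₂ p = d} := by
  rintro ⟨v, w⟩ hp ⟨v', w'⟩ hp' hne
  have hpp' := hp.trans hp'.symm
  simp only [tensorCliqueIndex, Prod.mk.injEq] at hpp'
  obtain ⟨⟨hv, hw⟩, hk⟩ := hpp'
  have hne_fst : v ≠ v' := by
    rintro rfl
    exact hne (Prod.ext rfl (hg₂ (Prod.ext hw (sub_left_injective hk))))
  have hne_snd : w ≠ w' := by
    rintro rfl
    exact hne_fst (hg₁ (Prod.ext hv (sub_right_injective hk)))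
  exact ⟨hc₁ _ rfl hv.symm hne_fst, hc₂ _ rfl hw.symm hne_snd⟩

theorem ncard_fiber_tensorCliqueIndex (f₁ : V₁ → ι₁) (g₁ : V₁ → K) {f₂ : V₂ → ι₂}
    {g₂ : V₂ → K} (hg₂ : Bijective fun w => (f₂ w, g₂ w)) (c₁ : ι₁) (c₂ : ι₂) (k : K) :
    {p | tensorCliqueIndex f₁ g₁ f₂ g₂ p = ((c₁, c₂), k)}.ncard = {v | f₁ v = c₁}.ncard := by
  set e := Equiv.ofBijective _ hg₂
  have hfiber : {p | tensorCliqueIndex f₁ g₁ f₂ g₂ p = ((c₁, c₂), k)} =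
      (fun v => (v, e.symm (c₂, g₁ v + k))) '' {v | f₁ v = c₁} := by
    ext ⟨v, w⟩
    simp only [Set.mem_image, Prod.mk.injEq, existsAndEq, true_and, Equiv.symm_apply_eq]
    simp only [tensorCliqueIndex, e, Equiv.ofBijective_apply, Prod.mk.injEq, sub_eq_iff_eq_add',
      and_assoc]
    rw [eq_comm (a := c₂), eq_comm (a := g₁ v + k)]
    exact Iff.rfl
  rw [hfiber, Set.ncard_image_of_injective _ fun _ _ h => congrArg Prod.fst h]

end TensorCliques

theorem tensor_clique_partition_general {V₁ V₂ : Type*} [Fintype V₁]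
    (G₁ : SimpleGraph V₁) (G₂ : SimpleGraph V₂) (m₁ m₂ s₁ s₂ : ℕ) (hs : s₁ ≤ s₂)
    (f₁ : V₁ → Fin m₁) (f₂ : V₂ → Fin m₂)
    (h₁ : ∀ c, G₁.IsClique {v | f₁ v = c} ∧ {v | f₁ v = c}.ncard = s₁ ∧
      ∀ v ∉ {v | f₁ v = c}, ¬G₁.IsClique (insert v {v | f₁ v = c}))
    (h₂ : ∀ c, G₂.IsClique {v | f₂ v = c} ∧ {v | f₂ v = c}.ncard = s₂ ∧
      ∀ v ∉ {v | f₂ v = c}, ¬G₂.IsClique (insert v {v | f₂ v = c})) :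
    ∃ f : V₁ × V₂ → Fin (m₁ * m₂ * s₂),
      ∀ c, (tensorGraph G₁ G₂).IsClique {v | f v = c} ∧ {v | f v = c}.ncard = s₁ := by
  obtain rfl | hs₂ := Nat.eq_zero_or_pos s₂
  · have : IsEmpty V₁ := isEmpty_of_ncard_fiber_eq_zero f₁ fun c =>
      (h₁ c).2.1.trans (Nat.le_zero.mp hs)
    exact ⟨fun p => isEmptyElim p.1, fun c => c.elim0⟩
  have : NeZero s₂ := ⟨hs₂.ne'⟩
  obtain ⟨g₁, hg₁⟩ := exists_bijective_prod_fin_of_ncard_fiber f₁ (fun _ => Set.toFinite _)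
    fun c => (h₁ c).2.1
  obtain ⟨g₂, hg₂⟩ := exists_bijective_prod_fin_of_ncard_fiber f₂
    (fun c => Set.finite_of_ncard_pos ((h₂ c).2.1 ▸ hs₂)) fun c => (h₂ c).2.1
  let E : (Fin m₁ × Fin m₂) × Fin s₂ ≃ Fin (m₁ * m₂ * s₂) :=
    (finProdFinEquiv.prodCongr (Equiv.refl _)).trans finProdFinEquiv
  let index := tensorCliqueIndex f₁ (Fin.castLE hs ∘ g₁) f₂ g₂
  refine ⟨E ∘ index, fun c => ?_⟩
  obtain ⟨⟨⟨c₁, c₂⟩, k⟩, rfl⟩ := E.surjective c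
  have hfiber : {p | (E ∘ index) p = E ((c₁, c₂), k)} = {p | index p = ((c₁, c₂), k)} :=
    Set.ext fun _ => E.apply_eq_iff_eq
  rw [hfiber, ncard_fiber_tensorCliqueIndex _ _ hg₂, (h₁ c₁).2.1]
  refine ⟨isClique_tensorGraph_fiber_tensorCliqueIndex (fun c => (h₁ c).1) (fun c => (h₂ c).1)
    ?_ hg₂.injective _, rfl⟩
  exact (Injective.prodMap injective_id (Fin.castLE_injective hs)).comp hg₁.injective

/-- If the vertex sets of `G₁` and `G₂` are partitioned into `m₁` resp. `m₂`
vertex-disjoint maximal cliques, all of size `s₁` resp. `s₂` with `s₁ ≤ s₂`, then the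
tensor product `G₁ × G₂` admits a partition of its vertex set into `m₁ m₂ s₂`
vertex-disjoint cliques, each of size `s₁`. -/
theorem tensor_clique_partition {V₁ V₂ : Type*} [Fintype V₁] [Fintype V₂]
    (G₁ : SimpleGraph V₁) (G₂ : SimpleGraph V₂) (m₁ m₂ s₁ s₂ : ℕ) (hs : s₁ ≤ s₂)
    (f₁ : V₁ → Fin m₁) (f₂ : V₂ → Fin m₂)
    (h₁ : ∀ c, G₁.IsClique {v | f₁ v = c} ∧ {v | f₁ v = c}.ncard = s₁ ∧
      ∀ v ∉ {v | f₁ v = c}, ¬G₁.IsClique (insert v {v | f₁ v = c}))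
    (h₂ : ∀ c, G₂.IsClique {v | f₂ v = c} ∧ {v | f₂ v = c}.ncard = s₂ ∧
      ∀ v ∉ {v | f₂ v = c}, ¬G₂.IsClique (insert v {v | f₂ v = c})) :
    ∃ f : V₁ × V₂ → Fin (m₁ * m₂ * s₂),
      ∀ c, (tensorGraph G₁ G₂).IsClique {v | f v = c} ∧ {v | f v = c}.ncard = s₁ :=
  tensor_clique_partition_general G₁ G₂ m₁ m₂ s₁ s₂ hs f₁ f₂ h₁ h₂
end

section
/- If R is the direct product of finite rings R₁, …, Rₙ with unity, then the distant graph G(R,Δ) is isomorphic to the tensor product of the distant graphs G(R₁,Δ₁) × ⋯ × G(Rₙ,Δₙ): points of P(R) correspond to n-tuples of points, and two tuples are distant iff they are distant in every coordinate. -/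
open Matrix

/-!
A cyclic submodule of `(∏ Rᵢ)²` is determined by its images under the coordinate projections,
and `GL₂(∏ Rᵢ) ≅ ∏ GL₂(Rᵢ)` compatibly with these projections. Hence projecting coordinatewise
identifies the `GL₂`-orbit of `R(1,0)` with the product of the orbits, and likewise the orbit of
the pair `(R(1,0), R(0,1))`.
-/

open Submodule

section Pi

variable {ι : Type*} {R : ι → Type*} [∀ i, Ring (R i)] {m : Type*}

def coordProj (i : ι) : (m → ∀ i, R i) →ₛₗ[Pi.evalRingHom R i] (m → R i) where
  toFun v j := v j i
  map_add' _ _ := rfl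
  map_smul' _ _ := rfl

theorem map_coordProj_span_singleton (i : ι) (v : m → ∀ i, R i) :
    (span (∀ i, R i) {v}).map (coordProj i) = span (R i) {fun j => v j i} := by
  rw [map_span, Set.image_singleton]
  rfl

theorem mem_span_singleton_iff_forall_coord {v w : m → ∀ i, R i} :
    v ∈ span (∀ i, R i) {w} ↔ ∀ i, (fun j => v j i) ∈ span (R i) {fun j => w j i} := by
  simp only [mem_span_singleton]
  constructor
  · rintro ⟨c, rfl⟩ i
    exact ⟨c i, rfl⟩
  · intro h
    choose c hc using h
    exact ⟨c, funext fun j => funext fun i => congrFun (hc i) j⟩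

theorem eq_of_forall_map_coordProj_eq {p q : Submodule (∀ i, R i) (m → ∀ i, R i)}
    [p.IsPrincipal] [q.IsPrincipal] (h : ∀ i, p.map (coordProj i) = q.map (coordProj i)) :
    p = q := by
  rw [← IsPrincipal.span_singleton_generator p,
    ← IsPrincipal.span_singleton_generator q] at h ⊢
  simp only [map_coordProj_span_singleton] at h
  apply le_antisymm <;> rw [span_singleton_le_iff_mem, mem_span_singleton_iff_forall_coord]
  · exact fun i => (h i).le (mem_span_singleton_self _)
  · exact fun i => (h i).ge (mem_span_singleton_self _)

theorem eval_vecMul_pi [Fintype m] (i : ι) (v : m → ∀ i, R i)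
    (M : Matrix m m (∀ i, R i)) :
    (fun k => (v ᵥ* M) k i) = (fun j => v j i) ᵥ* M.map (· i) := by
  funext k
  simp [vecMul, dotProduct]

def unitsMatrixPiEquiv [Fintype m] [DecidableEq m] :
    (Matrix m m (∀ i, R i))ˣ ≃* ∀ i, (Matrix m m (R i))ˣ :=
  (Units.mapEquiv piRingEquiv.toMulEquiv).trans MulEquiv.piUnits

theorem coe_unitsMatrixPiEquiv_apply [Fintype m] [DecidableEq m]
    (g : (Matrix m m (∀ i, R i))ˣ) (i : ι) :
    (unitsMatrixPiEquiv g i : Matrix m m (R i)) = (g : Matrix m m (∀ i, R i)).map (· i) :=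
  rfl

end Pi

theorem mulGL_ptSub {S : Type*} [Ring S] (g : (Matrix (Fin 2) (Fin 2) S)ˣ) (a b : S) :
    mulGL S g (ptSub S a b) = span S {![a, b] ᵥ* g.val} := by
  rw [mulGL, ptSub, map_span, Set.image_singleton, vecMulLinear_apply]

instance isPrincipal_mulGL_ptSub {S : Type*} [Ring S] (g : (Matrix (Fin 2) (Fin 2) S)ˣ)
    (a b : S) : (mulGL S g (ptSub S a b)).IsPrincipal :=
  ⟨_, mulGL_ptSub g a b⟩

theorem isPrincipal_of_mem_projLine {S : Type*} [Ring S] {p : Submodule S (Fin 2 → S)}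
    (hp : p ∈ projLine S) : p.IsPrincipal := by
  obtain ⟨g, rfl⟩ := hp
  infer_instance

section ProjLinePi

variable {ι : Type*} {R : ι → Type*} [∀ i, Ring (R i)]

theorem map_coordProj_mulGL_ptSub (i : ι) (g : (Matrix (Fin 2) (Fin 2) (∀ i, R i))ˣ)
    (a b : ∀ i, R i) :
    (mulGL _ g (ptSub _ a b)).map (coordProj i) =
      mulGL (R i) (unitsMatrixPiEquiv g i) (ptSub (R i) (a i) (b i)) := by
  rw [mulGL_ptSub, mulGL_ptSub, map_coordProj_span_singleton, eval_vecMul_pi,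
    coe_unitsMatrixPiEquiv_apply]
  congr 3
  funext j
  fin_cases j <;> rfl

theorem mulGL_ptSub_eq_iff {p : Submodule (∀ i, R i) (Fin 2 → ∀ i, R i)} [p.IsPrincipal]
    (g : (Matrix (Fin 2) (Fin 2) (∀ i, R i))ˣ) (a b : ∀ i, R i) :
    mulGL _ g (ptSub _ a b) = p ↔
      ∀ i, mulGL (R i) (unitsMatrixPiEquiv g i) (ptSub (R i) (a i) (b i)) =
        p.map (coordProj i) := by
  simp only [← map_coordProj_mulGL_ptSub]
  exact ⟨fun h i => h ▸ rfl, eq_of_forall_map_coordProj_eq⟩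

theorem map_coordProj_mem_projLine {p : Submodule (∀ i, R i) (Fin 2 → ∀ i, R i)}
    (hp : p ∈ projLine (∀ i, R i)) (i : ι) : p.map (coordProj i) ∈ projLine (R i) := by
  obtain ⟨g, rfl⟩ := hp
  exact ⟨unitsMatrixPiEquiv g i, (map_coordProj_mulGL_ptSub i g 1 0).symm⟩

variable (R) in
noncomputable def projLinePiEquiv : projLine (∀ i, R i) ≃ ∀ i, projLine (R i) :=
  Equiv.ofBijective (fun p i => ⟨p.1.map (coordProj i), map_coordProj_mem_projLine p.2 i⟩) <| by
    constructor
    · rintro ⟨p, hp⟩ ⟨q, hq⟩ h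
      have := isPrincipal_of_mem_projLine hp
      have := isPrincipal_of_mem_projLine hq
      exact Subtype.ext <| eq_of_forall_map_coordProj_eq fun i =>
        congrArg Subtype.val (congrFun h i)
    · intro P
      choose g hg using fun i => (P i).2
      refine ⟨⟨_, unitsMatrixPiEquiv.symm g, rfl⟩, funext fun i => Subtype.ext ?_⟩
      simp only [map_coordProj_mulGL_ptSub, MulEquiv.apply_symm_apply]
      exact hg i

theorem isDistant_pi_iff {p q : Submodule (∀ i, R i) (Fin 2 → ∀ i, R i)}
    (hp : p ∈ projLine (∀ i, R i)) (hq : q ∈ projLine (∀ i, R i)) :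
    IsDistant (∀ i, R i) p q ↔
      ∀ i, IsDistant (R i) (p.map (coordProj i)) (q.map (coordProj i)) := by
  have := isPrincipal_of_mem_projLine hp
  have := isPrincipal_of_mem_projLine hq
  constructor
  · rintro ⟨g, hgp, hgq⟩ i
    exact ⟨unitsMatrixPiEquiv g i, (mulGL_ptSub_eq_iff g 1 0).1 hgp i,
      (mulGL_ptSub_eq_iff g 0 1).1 hgq i⟩
  · intro h
    choose g hgp hgq using h
    refine ⟨unitsMatrixPiEquiv.symm g, ?_, ?_⟩ <;>
      simp only [mulGL_ptSub_eq_iff, MulEquiv.apply_symm_apply, Pi.one_apply, Pi.zero_apply]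
    exacts [hgp, hgq]

end ProjLinePi

theorem distant_graph_of_prod_general {n : ℕ} (R : Fin n → Type*) [∀ i, Ring (R i)] :
    ∃ e : {p : Submodule (∀ i, R i) (Fin 2 → ∀ i, R i) // p ∈ projLine (∀ i, R i)} ≃
        (∀ i, {p : Submodule (R i) (Fin 2 → R i) // p ∈ projLine (R i)}),
      ∀ p q, IsDistant (∀ i, R i) p.1 q.1 ↔ ∀ i, IsDistant (R i) (e p i).1 (e q i).1 :=
  ⟨projLinePiEquiv R, fun p q => isDistant_pi_iff p.2 q.2⟩

/-- For a direct product `R = R₁ × ⋯ × Rₙ` of finite rings, the distant graph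
`G(R,Δ)` is isomorphic to the tensor product of the graphs `G(Rᵢ,Δᵢ)`: points of `P(R)`
correspond to tuples of points, and two tuples are distant iff they are distant in every
coordinate. -/
theorem distant_graph_of_prod {n : ℕ} (R : Fin n → Type*) [∀ i, Ring (R i)]
    [∀ i, Fintype (R i)] :
    ∃ e : {p : Submodule (∀ i, R i) (Fin 2 → ∀ i, R i) // p ∈ projLine (∀ i, R i)} ≃
        (∀ i, {p : Submodule (R i) (Fin 2 → R i) // p ∈ projLine (R i)}),
      ∀ p q, IsDistant (∀ i, R i) p.1 q.1 ↔ ∀ i, IsDistant (R i) (e p i).1 (e q i).1 :=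
  distant_graph_of_prod_general R
end
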